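/- Let p ≥ 1 and l ≥ 1 be integers, set m = 2^l, and let f ∈ Ω be monotone. Then the number of points of the refined inner grid lying in the uncertain region determined by the coarse inner grid satisfies card( {i/(2m) : i = 1, …, 2m−1}^p ∩ U( {i/m : i = 1, …, m−1}^p , f) ) = (2m − 1)^p − (2m − 2)^p. -/

import Mathlib

open MeasureTheory Set

/-- The uncertain region `U(D, f)` on the cube `[0,1]^p`. -/
def uncertainRegion (p : ℕ) (D : Set (Fin p → ℝ)) (f : (Fin p → ℝ) → ℝ) :
    Set (Fin p → ℝ) :=
  Icc 0 1 \ ((⋃ x ∈ {y ∈ D | f y = -1}, Icc (0 : Fin p → ℝ) x) ∪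
             (⋃ x ∈ {y ∈ D | f y = 1}, Icc x (1 : Fin p → ℝ)))

/-- `Ω`: monotone `{-1,1}`-valued functions on the cube `[0,1]^p`. -/
def OmegaSet (p : ℕ) : Set ((Fin p → ℝ) → ℝ) :=
  {f | MonotoneOn f (Icc 0 1) ∧ ∀ x ∈ Icc (0 : Fin p → ℝ) 1, f x = -1 ∨ f x = 1}

/-- The inner grid `{i/m : i = 1, …, m-1}^p`. -/
def innerDyGrid (p m : ℕ) : Set (Fin p → ℝ) :=
  {x | ∀ k, ∃ i : ℕ, 1 ≤ i ∧ i < m ∧ x k = (i : ℝ) / (m : ℝ)}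

/-!
Write a fine point as `j / (2m)` with `j ∈ {1, …, 2m-1}^p`. The coarse points below it are the
`i / m` with `i ≤ ⌊j/2⌋`, those above it the `i / m` with `i ≥ ⌈j/2⌉`. By monotonicity of `f`
the point lies outside the uncertain region iff `j ≥ 2` and `f(⌊j/2⌋/m) = 1`, or `j ≤ 2m-2`
and `f(⌈j/2⌉/m) = -1`, and these two cases exclude each other. Shifting the first kind of `j`
down by one, both kinds together become the `b ∈ {1, …, 2m-2}^p`, split according to the
value of `f(⌈b/2⌉/m)`; so exactly `(2m-2)^p` fine points are certain.
-/

section GridPoint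

variable {p : ℕ}

noncomputable def gridPoint (m : ℕ) (a : Fin p → ℕ) : Fin p → ℝ := fun k => a k / m

theorem gridPoint_le_gridPoint_iff_mul_le {m n : ℕ} (hm : 0 < m) (hn : 0 < n)
    {a b : Fin p → ℕ} : gridPoint m a ≤ gridPoint n b ↔ ∀ k, a k * n ≤ b k * m := by
  refine forall_congr' fun k => ?_
  simp only [gridPoint]
  rw [div_le_div_iff₀ (by positivity) (by positivity)]
  norm_cast

theorem gridPoint_le_gridPoint_iff {m : ℕ} (hm : 0 < m) {a b : Fin p → ℕ} :
    gridPoint m a ≤ gridPoint m b ↔ a ≤ b := by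
  simp only [gridPoint_le_gridPoint_iff_mul_le hm hm, Nat.mul_le_mul_right_iff hm, Pi.le_def]

theorem gridPoint_injective {m : ℕ} (hm : 0 < m) : Function.Injective (gridPoint (p := p) m) :=
  fun _ _ h => le_antisymm ((gridPoint_le_gridPoint_iff hm).1 h.le)
    ((gridPoint_le_gridPoint_iff hm).1 h.ge)

theorem gridPoint_le_gridPoint_two_mul_iff {m : ℕ} (hm : 0 < m) {a b : Fin p → ℕ} :
    gridPoint m a ≤ gridPoint (2 * m) b ↔ ∀ k, a k ≤ b k / 2 := by
  rw [gridPoint_le_gridPoint_iff_mul_le hm (by omega)]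
  refine forall_congr' fun k => ?_
  rw [Nat.le_div_iff_mul_le two_pos, ← mul_assoc, mul_comm (a k)]
  exact Nat.mul_le_mul_right_iff hm

theorem gridPoint_two_mul_le_gridPoint_iff {m : ℕ} (hm : 0 < m) {a b : Fin p → ℕ} :
    gridPoint (2 * m) b ≤ gridPoint m a ↔ ∀ k, (b k + 1) / 2 ≤ a k := by
  rw [gridPoint_le_gridPoint_iff_mul_le (by omega) hm]
  refine forall_congr' fun k => ?_
  rw [← mul_assoc, mul_comm (a k), Nat.mul_le_mul_right_iff hm]
  omega

theorem gridPoint_mem_Icc {m : ℕ} (hm : 0 < m) {a : Fin p → ℕ} (ha : ∀ k, a k ≤ m) :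
    gridPoint m a ∈ Icc 0 1 := by
  refine ⟨fun k => by simp only [gridPoint]; positivity, fun k => ?_⟩
  simpa [gridPoint, div_le_one (by positivity : (0 : ℝ) < m)] using ha k

theorem innerDyGrid_eq_image (p m : ℕ) :
    innerDyGrid p m =
      gridPoint m '' ↑(Fintype.piFinset fun _ : Fin p => Finset.Icc 1 (m - 1)) := by
  ext x
  constructor
  · intro hx
    choose a ha₁ ha₂ hx using hx
    refine ⟨a, ?_, (funext hx).symm⟩
    simp only [Finset.mem_coe, Fintype.mem_piFinset, Finset.mem_Icc]
    exact fun k => ⟨ha₁ k, by have := ha₂ k; omega⟩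
  · rintro ⟨a, ha, rfl⟩ k
    simp only [Finset.mem_coe, Fintype.mem_piFinset, Finset.mem_Icc] at ha
    exact ⟨a k, (ha k).1, by have := ha k; omega, rfl⟩

end GridPoint

namespace OmegaSet

variable {p m : ℕ} {f : (Fin p → ℝ) → ℝ} {x y : Fin p → ℝ}

theorem eq_one_of_le (hf : f ∈ OmegaSet p) (hx : x ∈ Icc 0 1) (hy : y ∈ Icc 0 1)
    (hxy : x ≤ y) (h : f x = 1) : f y = 1 := by
  have := hf.1 hx hy hxy
  rcases hf.2 y hy with h' | h'
  · linarith
  · exact h'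

theorem eq_neg_one_of_le (hf : f ∈ OmegaSet p) (hx : x ∈ Icc 0 1) (hy : y ∈ Icc 0 1)
    (hxy : x ≤ y) (h : f y = -1) : f x = -1 := by
  have := hf.1 hx hy hxy
  rcases hf.2 x hx with h' | h'
  · exact h'
  · linarith

theorem eq_neg_one_iff_ne_one (hf : f ∈ OmegaSet p) (hx : x ∈ Icc 0 1) :
    f x = -1 ↔ f x ≠ 1 := by
  rcases hf.2 x hx with h | h <;> simp [h] <;> norm_num

theorem monotoneOn_gridPoint_eq_one (hf : f ∈ OmegaSet p) (hm : 0 < m) :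
    MonotoneOn (fun a => f (gridPoint m a) = 1) (Set.Iic fun _ => m) :=
  fun _ ha _ hb hab => eq_one_of_le hf (gridPoint_mem_Icc hm ha) (gridPoint_mem_Icc hm hb)
    ((gridPoint_le_gridPoint_iff hm).2 hab)

end OmegaSet

section Counting

open Finset

variable {p : ℕ}

/-- `j` indexes the fine point `j / (2m)`, `P` marks the coarse indices `a` with `f (a / m) = 1`;
`j k / 2` and `(j k + 1) / 2` are the nearest coarse indices below and above `j k`. -/
def IsDetermined (m : ℕ) (P : (Fin p → ℕ) → Prop) (j : Fin p → ℕ) : Prop :=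
  ((∀ k, 2 ≤ j k) ∧ P fun k => j k / 2) ∨
    ((∀ k, j k ≤ 2 * m - 2) ∧ ¬P fun k => (j k + 1) / 2)

open Classical in
theorem card_filter_div_two_eq_card_filter_succ_div_two (m : ℕ) (P : (Fin p → ℕ) → Prop) :
    #((Fintype.piFinset fun _ => Icc 1 (2 * m - 1)).filter
        fun j => (∀ k, 2 ≤ j k) ∧ P fun k => j k / 2) =
      #((Fintype.piFinset fun _ => Icc 1 (2 * m - 2)).filter
        fun b => P fun k => (b k + 1) / 2) := by
  refine card_nbij' (fun j k => j k - 1) (fun b k => b k + 1) ?_ ?_ ?_ ?_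
  · rintro j hj
    simp only [coe_filter, Fintype.mem_piFinset, Finset.mem_Icc, Set.mem_ofPred_eq] at hj ⊢
    obtain ⟨hjJ, hj₂, hPj⟩ := hj
    have hsucc : ∀ k, j k - 1 + 1 = j k := fun k => by have := hj₂ k; omega
    exact ⟨fun k => by have := hjJ k; have := hj₂ k; omega, by simpa only [hsucc] using hPj⟩
  · rintro b hb
    simp only [coe_filter, Fintype.mem_piFinset, Finset.mem_Icc, Set.mem_ofPred_eq] at hb ⊢
    obtain ⟨hbK, hPb⟩ := hb
    exact ⟨fun k => by have := hbK k; omega, fun k => by have := hbK k; omega, hPb⟩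
  · rintro j hj
    simp only [coe_filter, Set.mem_ofPred_eq] at hj
    funext k
    have := hj.2.1 k
    dsimp only
    omega
  · intro b _
    simp

open Classical in
theorem card_filter_isDetermined (m : ℕ) {P : (Fin p → ℕ) → Prop}
    (hP : MonotoneOn P (Set.Iic fun _ => m)) :
    #((Fintype.piFinset fun _ => Icc 1 (2 * m - 1)).filter (IsDetermined m P)) =
      (2 * m - 2) ^ p := by
  set J := Fintype.piFinset fun _ : Fin p => Icc 1 (2 * m - 1)
  set K := Fintype.piFinset fun _ : Fin p => Icc 1 (2 * m - 2)
  set A := J.filter fun j => (∀ k, 2 ≤ j k) ∧ P fun k => j k / 2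
  set B := J.filter fun j => (∀ k, j k ≤ 2 * m - 2) ∧ ¬P fun k => (j k + 1) / 2
  have hsplit : J.filter (IsDetermined m P) = A ∪ B := by
    ext j
    simp only [A, B, IsDetermined, Finset.mem_union, mem_filter, and_or_left]
  have hdisj : Disjoint A B := by
    refine disjoint_filter.2 fun j hj ⟨_, hPj⟩ ⟨_, hnPj⟩ => hnPj (hP ?_ ?_ ?_ hPj)
    all_goals
      intro k
      have := Fintype.mem_piFinset.1 hj k
      simp only [Finset.mem_Icc] at this
      dsimp only
      omega
  have hB : B = K.filter fun b => ¬P fun k => (b k + 1) / 2 := by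
    ext j
    simp only [B, J, K, mem_filter, Fintype.mem_piFinset, Finset.mem_Icc]
    constructor
    · rintro ⟨hjJ, hj₂, hPj⟩
      exact ⟨fun k => ⟨(hjJ k).1, hj₂ k⟩, hPj⟩
    · rintro ⟨hjK, hPj⟩
      exact ⟨fun k => ⟨(hjK k).1, by have := hjK k; omega⟩, fun k => (hjK k).2, hPj⟩
  rw [hsplit, card_union_of_disjoint hdisj, card_filter_div_two_eq_card_filter_succ_div_two, hB,
    card_filter_add_card_filter_not, Fintype.card_piFinset]
  simp

end Counting

section Refinement

variable {p m : ℕ} {f : (Fin p → ℝ) → ℝ} {j : Fin p → ℕ}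

theorem gridPoint_two_mul_mem_iUnion_Icc_one_iff (hm : 0 < m) (hf : f ∈ OmegaSet p)
    (hj : ∀ k, j k ≤ 2 * m - 1) :
    gridPoint (2 * m) j ∈ ⋃ x ∈ {y ∈ innerDyGrid p m | f y = 1}, Icc x 1 ↔
      (∀ k, 2 ≤ j k) ∧ f (gridPoint m fun k => j k / 2) = 1 := by
  have hfloor : gridPoint m (fun k => j k / 2) ∈ Icc 0 1 :=
    gridPoint_mem_Icc hm fun k => by have := hj k; omega
  simp only [innerDyGrid_eq_image, mem_iUnion₂, mem_image, Finset.mem_coe,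
    Fintype.mem_piFinset, Finset.mem_Icc]
  constructor
  · rintro ⟨_, ⟨⟨a, ha, rfl⟩, hfa⟩, haj, -⟩
    rw [gridPoint_le_gridPoint_two_mul_iff hm] at haj
    refine ⟨fun k => by have := ha k; have := haj k; omega,
      OmegaSet.eq_one_of_le hf ?_ hfloor ((gridPoint_le_gridPoint_iff hm).2 haj) hfa⟩
    exact gridPoint_mem_Icc hm fun k => by have := ha k; omega
  · rintro ⟨hj₂, hfj⟩
    refine ⟨_, ⟨⟨_, fun k => ?_, rfl⟩, hfj⟩,
      (gridPoint_le_gridPoint_two_mul_iff hm).2 fun k => le_rfl,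
      (gridPoint_mem_Icc (by omega) fun k => by have := hj k; omega).2⟩
    have := hj k; have := hj₂ k; omega

theorem gridPoint_two_mul_mem_iUnion_Icc_zero_iff (hm : 0 < m) (hf : f ∈ OmegaSet p)
    (hj : ∀ k, 1 ≤ j k) :
    gridPoint (2 * m) j ∈ ⋃ x ∈ {y ∈ innerDyGrid p m | f y = -1}, Icc 0 x ↔
      (∀ k, j k ≤ 2 * m - 2) ∧ f (gridPoint m fun k => (j k + 1) / 2) = -1 := by
  simp only [innerDyGrid_eq_image, mem_iUnion₂, mem_image, Finset.mem_coe,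
    Fintype.mem_piFinset, Finset.mem_Icc]
  constructor
  · rintro ⟨_, ⟨⟨a, ha, rfl⟩, hfa⟩, -, hja⟩
    rw [gridPoint_two_mul_le_gridPoint_iff hm] at hja
    refine ⟨fun k => by have := ha k; have := hja k; omega,
      OmegaSet.eq_neg_one_of_le hf ?_ ?_ ((gridPoint_le_gridPoint_iff hm).2 hja) hfa⟩
    · exact gridPoint_mem_Icc hm fun k => by have := ha k; have := hja k; omega
    · exact gridPoint_mem_Icc hm fun k => by have := ha k; omega
  · rintro ⟨hj₂, hfj⟩
    refine ⟨_, ⟨⟨_, fun k => ?_, rfl⟩, hfj⟩,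
      (gridPoint_mem_Icc (by omega) fun k => by have := hj₂ k; omega).1,
      (gridPoint_two_mul_le_gridPoint_iff hm).2 fun k => le_rfl⟩
    have := hj k; have := hj₂ k; omega

theorem gridPoint_two_mul_mem_uncertainRegion_iff (hm : 0 < m) (hf : f ∈ OmegaSet p)
    (hj : ∀ k, 1 ≤ j k ∧ j k ≤ 2 * m - 1) :
    gridPoint (2 * m) j ∈ uncertainRegion p (innerDyGrid p m) f ↔
      ¬IsDetermined m (fun a => f (gridPoint m a) = 1) j := by
  have hceil : gridPoint m (fun k => (j k + 1) / 2) ∈ Icc 0 1 :=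
    gridPoint_mem_Icc hm fun k => by have := hj k; omega
  rw [uncertainRegion, mem_sdiff, mem_union, gridPoint_two_mul_mem_iUnion_Icc_one_iff hm hf
    fun k => (hj k).2, gridPoint_two_mul_mem_iUnion_Icc_zero_iff hm hf fun k => (hj k).1,
    OmegaSet.eq_neg_one_iff_ne_one hf hceil, IsDetermined, or_comm]
  exact and_iff_right (gridPoint_mem_Icc (by omega) fun k => by have := hj k; omega)

open Classical in
theorem innerDyGrid_two_mul_inter_uncertainRegion (hm : 0 < m) (hf : f ∈ OmegaSet p) :
    innerDyGrid p (2 * m) ∩ uncertainRegion p (innerDyGrid p m) f =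
      gridPoint (2 * m) '' ↑((Fintype.piFinset fun _ => Finset.Icc 1 (2 * m - 1)).filter
        fun j => ¬IsDetermined m (fun a => f (gridPoint m a) = 1) j) := by
  rw [innerDyGrid_eq_image, ← image_inter_preimage, Finset.coe_filter]
  congr 1
  ext j
  simp only [mem_inter_iff, Finset.mem_coe, Fintype.mem_piFinset, Finset.mem_Icc, mem_preimage,
    mem_ofPred_eq]
  exact and_congr_right fun hj => gridPoint_two_mul_mem_uncertainRegion_iff hm hf hj

end Refinement

theorem refined_inner_grid_uncertain_card_general (p l : ℕ)
    (f : (Fin p → ℝ) → ℝ) (hf : f ∈ OmegaSet p) :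
    (innerDyGrid p (2 * 2 ^ l) ∩ uncertainRegion p (innerDyGrid p (2 ^ l)) f).ncard
      = (2 * 2 ^ l - 1) ^ p - (2 * 2 ^ l - 2) ^ p := by
  classical
  have hm : 0 < 2 ^ l := by positivity
  rw [innerDyGrid_two_mul_inter_uncertainRegion hm hf,
    ncard_image_of_injective _ (gridPoint_injective (by omega)), ncard_coe_finset,
    Finset.filter_not, Finset.card_sdiff_of_subset (Finset.filter_subset _ _),
    card_filter_isDetermined _ (OmegaSet.monotoneOn_gridPoint_eq_one hf hm),
    Fintype.card_piFinset]
  simp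

/-- Single refinement step for inner grids: with `m = 2^l`, `l ≥ 1`, the number of
points of the refined inner grid `{i/(2m) : i = 1,…,2m-1}^p` lying in the uncertain
region of the coarse inner grid `{i/m : i = 1,…,m-1}^p` equals
`(2m - 1)^p - (2m - 2)^p`. -/
theorem refined_inner_grid_uncertain_card (p l : ℕ) (hp : 1 ≤ p) (hl : 1 ≤ l)
    (f : (Fin p → ℝ) → ℝ) (hf : f ∈ OmegaSet p) :
    (innerDyGrid p (2 * 2 ^ l) ∩ uncertainRegion p (innerDyGrid p (2 ^ l)) f).ncard
      = (2 * 2 ^ l - 1) ^ p - (2 * 2 ^ l - 2) ^ p :=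
  refined_inner_grid_uncertain_card_general p l f hf
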